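/- arXiv:1612.08212 — 2 statements merged into one kernel-verified Lean document; each statement's English description precedes it below -/
import Mathlib

section
/- For real numbers a1, a2 ≥ 0 with a1 + a2 < 2 and positive reals A1, A2, A3, the double integral over (x,y) ∈ (0,∞)² of x^{1+2a1} y^{1+2a2} A1 A2 A3 / (x²A1 + y²A2 + A3)⁴ dx dy equals A1^{−a1} A2^{−a2} A3^{a1+a2−1} · (1/4) · B(2+a1+a2, 2−a1−a2) · B(1+a1, 1+a2), where B is the Beta function. -/
open MeasureTheory Real

/-- The Euler Beta function `B(p,q) = Γ(p)Γ(q)/Γ(p+q)`. -/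
noncomputable def realBeta (p q : ℝ) : ℝ := Real.Gamma p * Real.Gamma q / Real.Gamma (p + q)

/-!
With `p = 1 + a1`, `q = 1 + a2`, `r = 2 - a1 - a2` the integrand is
`A1 A2 A3 · x^(2p-1) y^(2q-1) (A3 + A1 x² + A2 y²)^(-(p+q+r))`, and we integrate in `y` first
instead of passing to polar coordinates. The substitutions `y = √(C/b) u`, `u² = t`,
`t = s/(1-s)` turn `∫₀^∞ y^(2q-1) (C + b y²)^(-(q+r'))` into Euler's integral on `[0,1]`, namely
`b^(-q) C^(-r') B(q,r')/2`. With `C = A3 + A1 x²` the remaining `x`-integral has the same shape,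
and the product `B(q, p+r) B(p, r) = B(p+q, r) B(p, q)` of the two Beta values is
`Γ(p)Γ(q)Γ(r)/Γ(p+q+r)`.
-/

open Set

lemma realBeta_eq_intervalIntegral {p q : ℝ} (hp : 0 < p) (hq : 0 < q) :
    realBeta p q = ∫ x in (0:ℝ)..1, x ^ (p - 1) * (1 - x) ^ (q - 1) := by
  have h := Complex.Gamma_mul_Gamma_eq_betaIntegral (s := p) (t := q)
    (by simpa using hp) (by simpa using hq)
  have hbeta : Complex.betaIntegral p q
      = ((∫ x in (0:ℝ)..1, x ^ (p - 1) * (1 - x) ^ (q - 1) : ℝ) : ℂ) := by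
    rw [Complex.betaIntegral, ← intervalIntegral.integral_ofReal]
    refine intervalIntegral.integral_congr fun x hx => ?_
    rw [uIcc_of_le zero_le_one] at hx
    rw [Complex.ofReal_mul, Complex.ofReal_cpow hx.1, Complex.ofReal_cpow (sub_nonneg.2 hx.2)]
    push_cast
    ring
  rw [hbeta, ← Complex.ofReal_add, Complex.Gamma_ofReal, Complex.Gamma_ofReal,
    Complex.Gamma_ofReal, ← Complex.ofReal_mul, ← Complex.ofReal_mul] at h
  rw [realBeta, div_eq_iff (Real.Gamma_pos_of_pos (add_pos hp hq)).ne']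
  exact (Complex.ofReal_injective h).trans (mul_comm _ _)

lemma image_div_one_sub_Ioo : (fun x : ℝ => x / (1 - x)) '' Ioo 0 1 = Ioi 0 := by
  ext y
  constructor
  · rintro ⟨x, hx, rfl⟩
    exact div_pos hx.1 (sub_pos.2 hx.2)
  · intro (hy : 0 < y)
    refine ⟨y / (1 + y), ⟨by positivity, (div_lt_one (by positivity)).2 (by linarith)⟩, ?_⟩
    field_simp
    ring

lemma injOn_div_one_sub : InjOn (fun x : ℝ => x / (1 - x)) (Ioo 0 1) := by
  intro a ha b hb (h : a / (1 - a) = b / (1 - b))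
  rw [div_eq_div_iff (sub_pos.2 ha.2).ne' (sub_pos.2 hb.2).ne'] at h
  linarith

lemma integral_rpow_mul_one_add_rpow_Ioi {p q : ℝ} (hp : 0 < p) (hq : 0 < q) :
    ∫ t in Ioi (0:ℝ), t ^ (p - 1) * (1 + t) ^ (-(p + q)) = realBeta p q := by
  have hderiv : ∀ x ∈ Ioo (0:ℝ) 1,
      HasDerivWithinAt (fun x => x / (1 - x)) ((1 - x) ^ (-2 : ℝ)) (Ioo 0 1) x := by
    intro x hx
    have h1 : 0 < 1 - x := sub_pos.2 hx.2
    have hd : HasDerivAt (fun x => x / (1 - x)) ((1 * (1 - x) - x * (0 - 1)) / (1 - x) ^ 2) x :=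
      (hasDerivAt_id x).div ((hasDerivAt_const x 1).sub (hasDerivAt_id x)) h1.ne'
    have hf' : (1 - x) ^ (-2 : ℝ) = (1 * (1 - x) - x * (0 - 1)) / (1 - x) ^ 2 := by
      rw [rpow_neg h1.le, rpow_two]
      ring
    exact hf' ▸ hd.hasDerivWithinAt
  rw [← image_div_one_sub_Ioo,
    integral_image_eq_integral_abs_deriv_smul measurableSet_Ioo hderiv injOn_div_one_sub,
    realBeta_eq_intervalIntegral hp hq, intervalIntegral.integral_of_le zero_le_one,
    integral_Ioc_eq_integral_Ioo]
  refine setIntegral_congr_fun measurableSet_Ioo fun x hx => ?_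
  have h1 : 0 < 1 - x := sub_pos.2 hx.2
  have hfx : 1 + x / (1 - x) = (1 - x)⁻¹ := by field_simp; ring
  rw [hfx, div_rpow hx.1.le h1.le, inv_rpow h1.le, ← rpow_neg h1.le, neg_neg, smul_eq_mul,
    abs_of_pos (rpow_pos_of_pos h1 _), div_eq_mul_inv, ← rpow_neg h1.le]
  calc (1 - x) ^ (-2 : ℝ) * (x ^ (p - 1) * (1 - x) ^ (-(p - 1)) * (1 - x) ^ (p + q))
      = x ^ (p - 1) * ((1 - x) ^ (-2 : ℝ) * (1 - x) ^ (-(p - 1)) * (1 - x) ^ (p + q)) := by ring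
    _ = x ^ (p - 1) * (1 - x) ^ (-2 + -(p - 1) + (p + q)) := by
        rw [← rpow_add h1, ← rpow_add h1]
    _ = x ^ (p - 1) * (1 - x) ^ (q - 1) := by ring_nf

lemma integral_rpow_mul_one_add_sq_rpow_Ioi {p q : ℝ} (hp : 0 < p) (hq : 0 < q) :
    ∫ x in Ioi (0:ℝ), x ^ (2 * p - 1) * (1 + x ^ 2) ^ (-(p + q)) = realBeta p q / 2 := by
  have h := integral_comp_rpow_Ioi_of_pos (g := fun t => t ^ (p - 1) * (1 + t) ^ (-(p + q)))
    two_pos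
  rw [integral_rpow_mul_one_add_rpow_Ioi hp hq] at h
  rw [← h, ← integral_div]
  refine setIntegral_congr_fun measurableSet_Ioi fun x (hx : 0 < x) => ?_
  rw [smul_eq_mul, ← rpow_mul hx.le, rpow_two, show 2 * p - 1 = (2 - 1) + 2 * (p - 1) by ring,
    rpow_add hx]
  ring

lemma integral_rpow_mul_add_mul_sq_rpow_Ioi {p q a c : ℝ} (hp : 0 < p) (hq : 0 < q)
    (ha : 0 < a) (hc : 0 < c) :
    ∫ x in Ioi (0:ℝ), x ^ (2 * p - 1) * (c + a * x ^ 2) ^ (-(p + q))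
      = a ^ (-p) * c ^ (-q) * realBeta p q / 2 := by
  set s := √(c / a)
  have hs : 0 < s := sqrt_pos.2 (div_pos hc ha)
  have hs2 : s ^ 2 = c / a := sq_sqrt (div_pos hc ha).le
  have hscale := integral_comp_mul_left_Ioi
    (fun x => x ^ (2 * p - 1) * (c + a * x ^ 2) ^ (-(p + q))) 0 hs
  rw [mul_zero, smul_eq_mul, eq_inv_mul_iff_mul_eq₀ hs.ne'] at hscale
  have hsubst : ∀ u ∈ Ioi (0:ℝ), (s * u) ^ (2 * p - 1) * (c + a * (s * u) ^ 2) ^ (-(p + q))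
      = s ^ (2 * p - 1) * c ^ (-(p + q)) * (u ^ (2 * p - 1) * (1 + u ^ 2) ^ (-(p + q))) := by
    intro u (hu : 0 < u)
    have hcu : c + a * (s * u) ^ 2 = c * (1 + u ^ 2) := by
      rw [mul_pow, hs2]
      field_simp
    rw [hcu, mul_rpow hs.le hu.le, mul_rpow hc.le (by positivity)]
    ring
  have hpow : s * s ^ (2 * p - 1) * c ^ (-(p + q)) = a ^ (-p) * c ^ (-q) := by
    rw [← rpow_one_add' hs.le (by linarith), show 1 + (2 * p - 1) = 2 * p by ring,
      rpow_mul hs.le, rpow_two, hs2, div_rpow hc.le ha.le, rpow_neg ha.le, rpow_neg hc.le,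
      rpow_neg hc.le, rpow_add hc]
    field_simp
  rw [← hscale, setIntegral_congr_fun measurableSet_Ioi hsubst, integral_const_mul,
    integral_rpow_mul_one_add_sq_rpow_Ioi hp hq, ← hpow]
  ring

lemma realBeta_add_mul_realBeta {p q r : ℝ} (hp : 0 < p) (hq : 0 < q) (hr : 0 < r) :
    realBeta (p + q) r * realBeta p q = realBeta q (p + r) * realBeta p r := by
  have hpq := (Gamma_pos_of_pos (add_pos hp hq)).ne'
  have hpr := (Gamma_pos_of_pos (add_pos hp hr)).ne'
  have hpqr := (Gamma_pos_of_pos (add_pos (add_pos hp hq) hr)).ne'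
  simp only [realBeta]
  rw [show q + (p + r) = p + q + r by ring]
  field_simp

lemma integral_integral_rpow_mul_rpow_mul_add_sq_rpow_Ioi {p q r a b c : ℝ} (hp : 0 < p)
    (hq : 0 < q) (hr : 0 < r) (ha : 0 < a) (hb : 0 < b) (hc : 0 < c) :
    ∫ x in Ioi (0:ℝ), ∫ y in Ioi (0:ℝ),
        x ^ (2 * p - 1) * y ^ (2 * q - 1) * (c + a * x ^ 2 + b * y ^ 2) ^ (-(p + q + r))
      = a ^ (-p) * b ^ (-q) * c ^ (-r) * realBeta (p + q) r * realBeta p q / 4 := by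
  have hinner : ∀ x ∈ Ioi (0:ℝ), ∫ y in Ioi (0:ℝ),
        x ^ (2 * p - 1) * y ^ (2 * q - 1) * (c + a * x ^ 2 + b * y ^ 2) ^ (-(p + q + r))
      = b ^ (-q) * realBeta q (p + r) / 2 * (x ^ (2 * p - 1) * (c + a * x ^ 2) ^ (-(p + r))) := by
    intro x _
    have hcx : 0 < c + a * x ^ 2 := by positivity
    have hsplit : ∀ y : ℝ,
        x ^ (2 * p - 1) * y ^ (2 * q - 1) * (c + a * x ^ 2 + b * y ^ 2) ^ (-(p + q + r))
          = x ^ (2 * p - 1) *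
              (y ^ (2 * q - 1) * (c + a * x ^ 2 + b * y ^ 2) ^ (-(q + (p + r)))) := by
      intro y
      rw [show -(q + (p + r)) = -(p + q + r) by ring]
      ring
    simp_rw [hsplit]
    rw [integral_const_mul, integral_rpow_mul_add_mul_sq_rpow_Ioi hq (add_pos hp hr) hb hcx]
    ring
  rw [setIntegral_congr_fun measurableSet_Ioi hinner, integral_const_mul,
    integral_rpow_mul_add_mul_sq_rpow_Ioi hp hr ha hc]
  linear_combination -(a ^ (-p) * b ^ (-q) * c ^ (-r) / 4) * realBeta_add_mul_realBeta hp hq hr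

/-- The radial-angular reduction of the fiber integral (case r = 2). -/
theorem stmt_1 (a1 a2 A1 A2 A3 : ℝ) (ha1 : 0 ≤ a1) (ha2 : 0 ≤ a2)
    (hsum : a1 + a2 < 2) (hA1 : 0 < A1) (hA2 : 0 < A2) (hA3 : 0 < A3) :
    ∫ x in Set.Ioi (0 : ℝ), ∫ y in Set.Ioi (0 : ℝ),
        (x ^ (1 + 2 * a1) * y ^ (1 + 2 * a2) * (A1 * A2 * A3)) /
          (x ^ 2 * A1 + y ^ 2 * A2 + A3) ^ 4
      = A1 ^ (-a1) * A2 ^ (-a2) * A3 ^ (a1 + a2 - 1) * (1 / 4) *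
          realBeta (2 + a1 + a2) (2 - a1 - a2) * realBeta (1 + a1) (1 + a2) := by
  have hintegrand : ∀ x y : ℝ,
      (x ^ (1 + 2 * a1) * y ^ (1 + 2 * a2) * (A1 * A2 * A3)) / (x ^ 2 * A1 + y ^ 2 * A2 + A3) ^ 4
        = A1 * A2 * A3 * (x ^ (2 * (1 + a1) - 1) * y ^ (2 * (1 + a2) - 1) *
            (A3 + A1 * x ^ 2 + A2 * y ^ 2) ^ (-((1 + a1) + (1 + a2) + (2 - a1 - a2)))) := by
    intro x y
    have hD : 0 < A3 + A1 * x ^ 2 + A2 * y ^ 2 := by positivity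
    rw [show -((1 + a1) + (1 + a2) + (2 - a1 - a2)) = -((4 : ℕ) : ℝ) by push_cast; ring,
      rpow_neg hD.le, rpow_natCast, show 2 * (1 + a1) - 1 = 1 + 2 * a1 by ring,
      show 2 * (1 + a2) - 1 = 1 + 2 * a2 by ring]
    ring
  simp_rw [hintegrand, integral_const_mul]
  rw [integral_integral_rpow_mul_rpow_mul_add_sq_rpow_Ioi (by linarith) (by linarith)
      (by linarith) hA1 hA2 hA3, show (1 + a1) + (1 + a2) = 2 + a1 + a2 by ring,
    show -a1 = 1 + -(1 + a1) by ring, show -a2 = 1 + -(1 + a2) by ring,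
    show a1 + a2 - 1 = 1 + -(2 - a1 - a2) by ring, rpow_add hA1, rpow_add hA2, rpow_add hA3,
    rpow_one, rpow_one, rpow_one]
  ring
end

section
/- Let Y be a compact complex manifold, θ₁,…,θ_{r+1} smooth closed real (1,1)-forms on Y, and for α = (α₁,…,α_r) ∈ ℝ^r_{≥0} with |α| = α₁+⋯+α_r ≤ 1 set θ_α := Σ_{λ=1}^r α_λ θ_λ + (1−|α|)θ_{r+1} and V_α := sup{ ψ ∈ PSH(Y, θ_α) : ψ ≤ 0 } (set V_α ≡ −∞ if PSH(Y,θ_α) contains no non-positive element). If α ≤ β componentwise with |β| < 1, then V_α/(1−|α|) ≤ V_β/(1−|β|) pointwise on Y. -/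
open scoped Manifold
open Set

/-! Plurisubharmonic functions (with values in `ℝ ∪ {−∞}`) on an open subset of a complex
normed space, defined via upper semicontinuity and domination by pluriharmonic
(real parts of polynomial) majorants on discs. -/

/-- `f : E → EReal` is plurisubharmonic on `s`. -/
def PshOn {E : Type*} [NormedAddCommGroup E] [NormedSpace ℂ E]
    (f : E → EReal) (s : Set E) : Prop :=
  UpperSemicontinuousOn f s ∧ (∀ x ∈ s, f x ≠ ⊤) ∧
    ∀ z ∈ s, ∀ w : E, ∀ ρ : ℝ, 0 < ρ →
      (∀ t : ℂ, ‖t‖ ≤ ρ → z + t • w ∈ s) →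
      ∀ q : Polynomial ℂ,
        (∀ t : ℂ, ‖t‖ = ρ → f (z + t • w) ≤ ((q.eval t).re : EReal)) →
        ∀ t : ℂ, ‖t‖ ≤ ρ → f (z + t • w) ≤ ((q.eval t).re : EReal)

/-- A real-valued function is plurisubharmonic on `s`. -/
def RealPshOn {E : Type*} [NormedAddCommGroup E] [NormedSpace ℂ E]
    (g : E → ℝ) (s : Set E) : Prop :=
  PshOn (fun x => (g x : EReal)) s

/-- A real-valued function is pluriharmonic on `s`. -/
def PluriharmonicOn {E : Type*} [NormedAddCommGroup E] [NormedSpace ℂ E]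
    (g : E → ℝ) (s : Set E) : Prop :=
  RealPshOn g s ∧ RealPshOn (fun x => -g x) s

section Manifold

variable (E : Type*) [NormedAddCommGroup E] [NormedSpace ℂ E]
  (Y : Type*) [TopologicalSpace Y] [ChartedSpace E Y]

/-- A smooth closed real `(1,1)`-form `θ` on the complex manifold `Y`, represented by a
family of smooth local potentials (one in each chart of the atlas) whose differences are
pluriharmonic on overlaps. -/
def IsPotentialFamily (pot : OpenPartialHomeomorph Y E → E → ℝ) : Prop :=
  (∀ φ ∈ atlas E Y, ContDiffOn ℝ (⊤ : ℕ∞) (pot φ) φ.target) ∧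
    ∀ φ ∈ atlas E Y, ∀ ψ ∈ atlas E Y,
      PluriharmonicOn (fun x => pot φ x - pot ψ (ψ (φ.symm x)))
        (φ.target ∩ φ.symm ⁻¹' ψ.source)

/-- `u ∈ PSH(Y, θ)`: in every chart, (local potential of `θ`) + `u` is plurisubharmonic. -/
def ThetaPsh (pot : OpenPartialHomeomorph Y E → E → ℝ) (u : Y → EReal) : Prop :=
  ∀ φ ∈ atlas E Y, PshOn (fun x => (pot φ x : EReal) + u (φ.symm x)) φ.target

/-- The envelope `V_θ = sup { u ∈ PSH(Y,θ) : u ≤ 0 }` (`≡ −∞` if the family is empty). -/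
noncomputable def pshEnvelope (pot : OpenPartialHomeomorph Y E → E → ℝ) : Y → EReal :=
  fun y => sSup ((fun u : Y → EReal => u y) ''
    {u | ThetaPsh E Y pot u ∧ ∀ y', u y' ≤ 0})

end Manifold


section Manifold

variable (E : Type*) [NormedAddCommGroup E] [NormedSpace ℂ E]
  (Y : Type*) [TopologicalSpace Y] [ChartedSpace E Y]

/-- Positivity (Kähler property) of a `(1,1)`-form given by local potentials: in each
chart the potential stays plurisubharmonic after subtracting a small multiple of `‖x‖²`. -/
def IsPositiveForm (pot : OpenPartialHomeomorph Y E → E → ℝ) : Prop :=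
  ∀ φ ∈ atlas E Y, ∃ ε > (0 : ℝ),
    RealPshOn (fun x => pot φ x - ε * ‖x‖ ^ 2) φ.target

/-- The local potentials of `θ_α = Σ_{λ=1}^r α_λ θ_λ + (1 − |α|) θ_{r+1}`. -/
def combPot {r : ℕ} (pot : Fin (r + 1) → OpenPartialHomeomorph Y E → E → ℝ)
    (α : Fin r → ℝ) : OpenPartialHomeomorph Y E → E → ℝ :=
  fun φ x => (∑ i : Fin r, α i * pot i.castSucc φ x) +
    (1 - ∑ i : Fin r, α i) * pot (Fin.last r) φ x

end Manifold

namespace PshAux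


lemma add_coe_le_coe_iff {a : EReal} {r m : ℝ} : a + (r : EReal) ≤ (m : EReal) ↔ a ≤ ((m - r : ℝ) : EReal) := by
  induction a using EReal.rec with
  | bot => simp
  | coe x => norm_cast; constructor <;> intro <;> linarith
  | top => simp [EReal.top_add_coe, ← EReal.coe_sub]

lemma add_coe_lt_coe {a : EReal} {r m : ℝ} (h : a + (r : EReal) < (m : EReal)) :
    a < ((m - r : ℝ) : EReal) := by
  induction a using EReal.rec with
  | bot => exact EReal.bot_lt_coe _
  | coe x => norm_cast at h ⊢; linarith
  | top => simp [EReal.top_add_coe] at h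

lemma coe_mul_le_coe_iff {c : ℝ} (hc : 0 < c) {a : EReal} {m : ℝ} :
    (c : EReal) * a ≤ (m : EReal) ↔ a ≤ ((m / c : ℝ) : EReal) := by
  induction a using EReal.rec with
  | bot => simp [EReal.coe_mul_bot_of_pos hc]
  | coe x =>
      rw [← EReal.coe_mul, EReal.coe_le_coe_iff, EReal.coe_le_coe_iff, le_div_iff₀ hc, mul_comm]
  | top => simp [EReal.coe_mul_top_of_pos hc]

lemma coe_mul_mono {c : ℝ} (hc : 0 ≤ c) {a b : EReal} (h : a ≤ b) :
    (c : EReal) * a ≤ (c : EReal) * b :=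
  mul_le_mul_of_nonneg_left h (by exact_mod_cast hc)

lemma key_id (A B c : ℝ) (hc : 0 < c) (e : EReal) :
    (B : EReal) + (c : EReal) * e =
      (c : EReal) * ((A : EReal) + e) + ((B - c * A : ℝ) : EReal) := by
  induction e using EReal.rec with
  | bot => simp [EReal.coe_mul_bot_of_pos hc]
  | coe x => norm_cast; ring
  | top =>
      rw [EReal.coe_add_top, EReal.coe_mul_top_of_pos hc, EReal.coe_add_top,
        EReal.top_add_coe]

lemma coe_mul_assoc (c d : ℝ) (a : EReal) :
    (c : EReal) * ((d : EReal) * a) = ((c * d : ℝ) : EReal) * a := by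
  rw [EReal.coe_mul, mul_assoc]



/-- Minimum principle for real parts of polynomials. -/
lemma rePoly_nonneg {ρ : ℝ} (hρ : 0 < ρ) (q : Polynomial ℂ)
    (h : ∀ t : ℂ, ‖t‖ = ρ → 0 ≤ (q.eval t).re) :
    ∀ t : ℂ, ‖t‖ ≤ ρ → 0 ≤ (q.eval t).re := by
  intro t ht
  have hd : DiffContOnCl ℂ (fun z => Complex.exp (-(q.eval z))) (Metric.ball (0:ℂ) ρ) :=
    (((q.differentiable).neg).cexp).diffContOnCl
  have hb : ‖Complex.exp (-(q.eval t))‖ ≤ 1 := by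
    apply Complex.norm_le_of_forall_mem_frontier_norm_le Metric.isBounded_ball hd
    · intro z hz
      rw [frontier_ball (0:ℂ) hρ.ne'] at hz
      have hz' : ‖z‖ = ρ := by simpa [Complex.dist_eq] using hz
      rw [Complex.norm_exp]
      have h0 : (-(q.eval z)).re ≤ 0 := by
        have := h z hz'; simp only [Complex.neg_re]; linarith
      simpa using Real.exp_le_one_iff.2 h0
    · rw [closure_ball (0:ℂ) hρ.ne']
      simpa [Complex.dist_eq] using ht
  rw [Complex.norm_exp, Real.exp_le_one_iff] at hb
  simpa using hb



lemma mul_conj_self {ρ : ℝ} {t : ℂ} (ht : ‖t‖ = ρ) :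
    t * starRingEnd ℂ t = ((ρ : ℂ))^2 := by
  rw [Complex.mul_conj, Complex.normSq_eq_norm_sq, ht]; push_cast; ring

/-- On the circle of radius `ρ`, `Re (p(t) * conj t ^ n)` equals `Re (P(t))` for a polynomial. -/
lemma exists_re_poly_of_laurent {ρ : ℝ} (hρ : 0 < ρ) (p : Polynomial ℂ) (n : ℕ) :
    ∃ P : Polynomial ℂ, ∀ t : ℂ, ‖t‖ = ρ →
      (P.eval t).re = (p.eval t * (starRingEnd ℂ t)^n).re := by
  induction p using Polynomial.induction_on' with
  | add p q hp hq =>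
      obtain ⟨P, hP⟩ := hp
      obtain ⟨Q, hQ⟩ := hq
      refine ⟨P + Q, fun t ht => ?_⟩
      simp only [Polynomial.eval_add, Complex.add_re, add_mul, hP t ht, hQ t ht]
  | monomial k c =>
      rcases le_or_gt n k with h | h
      · refine ⟨Polynomial.C (c * ((ρ:ℂ)^2)^n) * Polynomial.X ^ (k - n), fun t ht => ?_⟩
        have key : (Polynomial.C (c * ((ρ:ℂ)^2)^n) * Polynomial.X ^ (k - n)).eval t
            = (Polynomial.monomial k c).eval t * (starRingEnd ℂ t)^n := by
          obtain ⟨m, rfl⟩ : ∃ m, k = n + m := ⟨k - n, by omega⟩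
          have h2 : ((ρ:ℂ)^2)^n = (t * starRingEnd ℂ t)^n := by rw [mul_conj_self ht]
          simp only [Polynomial.eval_mul, Polynomial.eval_C, Polynomial.eval_pow,
            Polynomial.eval_X, Polynomial.eval_monomial, h2]
          rw [show n + m - n = m by omega]
          ring
        rw [key]
      · refine ⟨Polynomial.C (starRingEnd ℂ c * ((ρ:ℂ)^2)^k) * Polynomial.X ^ (n - k),
          fun t ht => ?_⟩
        have key : (Polynomial.C (starRingEnd ℂ c * ((ρ:ℂ)^2)^k) * Polynomial.X ^ (n - k)).eval t
            = starRingEnd ℂ ((Polynomial.monomial k c).eval t * (starRingEnd ℂ t)^n) := by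
          obtain ⟨m, rfl⟩ : ∃ m, n = k + m := ⟨n - k, by omega⟩
          have h2 : ((ρ:ℂ)^2)^k = (t * starRingEnd ℂ t)^k := by rw [mul_conj_self ht]
          simp only [Polynomial.eval_mul, Polynomial.eval_C, Polynomial.eval_pow,
            Polynomial.eval_X, Polynomial.eval_monomial, map_mul, map_pow,
            Complex.conj_conj, h2]
          rw [show k + m - k = m by omega]
          ring
        rw [key, Complex.conj_re]


section Circle

variable {ρ : ℝ}

/-- raise the `conj` exponent in a Laurent representation -/
lemma raise_rep (hρ : 0 < ρ) (p : Polynomial ℂ) {n m : ℕ} (hnm : n ≤ m) :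
    ∃ p' : Polynomial ℂ, ∀ t : ℂ, ‖t‖ = ρ →
      p'.eval t * (starRingEnd ℂ t)^m = p.eval t * (starRingEnd ℂ t)^n := by
  obtain ⟨k, rfl⟩ : ∃ k, m = n + k := ⟨m - n, by omega⟩
  refine ⟨Polynomial.C ((((ρ:ℂ)^2)^k)⁻¹) * p * Polynomial.X ^ k, fun t ht => ?_⟩
  have h2 : (t * starRingEnd ℂ t)^k = ((ρ:ℂ)^2)^k := by rw [mul_conj_self ht]
  have hne : ((ρ:ℂ)^2)^k ≠ 0 := by
    apply pow_ne_zero; apply pow_ne_zero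
    exact_mod_cast hρ.ne'
  simp only [Polynomial.eval_mul, Polynomial.eval_C, Polynomial.eval_pow, Polynomial.eval_X,
    pow_add]
  field_simp
  linear_combination (p.eval t * (starRingEnd ℂ t) ^ n) * h2

/-- The subalgebra of real continuous functions on the circle given by
"Laurent polynomials" `p(t) * conj t ^ n`. -/
noncomputable def laurentAlg (hρ : 0 < ρ) :
    Subalgebra ℝ C((Metric.sphere (0:ℂ) ρ : Set ℂ), ℝ) where
  carrier := {G | ∃ (p : Polynomial ℂ) (n : ℕ), ∀ t : (Metric.sphere (0:ℂ) ρ : Set ℂ),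
    ((G t : ℝ) : ℂ) = p.eval (t : ℂ) * (starRingEnd ℂ (t : ℂ))^n}
  mul_mem' := by
    rintro G H ⟨p₁, n₁, h₁⟩ ⟨p₂, n₂, h₂⟩
    refine ⟨p₁ * p₂, n₁ + n₂, fun t => ?_⟩
    simp only [ContinuousMap.mul_apply]
    push_cast
    rw [h₁ t, h₂ t]
    simp only [Polynomial.eval_mul, pow_add]
    ring
  add_mem' := by
    rintro G H ⟨p₁, n₁, h₁⟩ ⟨p₂, n₂, h₂⟩
    obtain ⟨p₁', hp₁⟩ := raise_rep hρ p₁ (le_max_left n₁ n₂)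
    obtain ⟨p₂', hp₂⟩ := raise_rep hρ p₂ (le_max_right n₁ n₂)
    refine ⟨p₁' + p₂', max n₁ n₂, fun t => ?_⟩
    have ht : ‖(t:ℂ)‖ = ρ := by
      have := t.2
      simpa [mem_sphere_iff_norm] using this
    simp only [ContinuousMap.add_apply]
    push_cast
    rw [h₁ t, h₂ t, ← hp₁ _ ht, ← hp₂ _ ht]
    simp only [Polynomial.eval_add]
    ring
  algebraMap_mem' := by
    intro r
    refine ⟨Polynomial.C (r : ℂ), 0, fun t => ?_⟩
    simp
  one_mem' := by
    refine ⟨1, 0, fun t => ?_⟩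
    simp
  zero_mem' := by
    refine ⟨0, 0, fun t => ?_⟩
    simp

lemma laurentAlg_separatesPoints (hρ : 0 < ρ) : (laurentAlg hρ).SeparatesPoints := by
  intro x y hxy
  have hx : ‖(x:ℂ)‖ = ρ := by have := x.2; simpa [mem_sphere_iff_norm] using this
  have hy : ‖(y:ℂ)‖ = ρ := by have := y.2; simpa [mem_sphere_iff_norm] using this
  have hρC : ((ρ:ℂ))^2 ≠ 0 := by
    apply pow_ne_zero; exact_mod_cast hρ.ne'
  have hρ0 : (ρ:ℂ) ≠ 0 := by exact_mod_cast hρ.ne'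
  have hxy' : (x:ℂ) ≠ (y:ℂ) := Subtype.coe_injective.ne hxy
  have hmem_re : (⟨fun t => (t:ℂ).re, Complex.continuous_re.comp continuous_subtype_val⟩ :
      C((Metric.sphere (0:ℂ) ρ : Set ℂ), ℝ)) ∈ laurentAlg hρ := by
    refine ⟨Polynomial.C ((2*(ρ:ℂ)^2)⁻¹) * (Polynomial.X^2 + Polynomial.C ((ρ:ℂ)^2)), 1,
      fun t => ?_⟩
    have ht : ‖(t:ℂ)‖ = ρ := by have := t.2; simpa [mem_sphere_iff_norm] using this
    have hmc : (t:ℂ) * starRingEnd ℂ (t:ℂ) = ((ρ:ℂ))^2 := mul_conj_self ht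
    have hre2 : (((t:ℂ).re : ℝ) : ℂ) = ((t:ℂ) + starRingEnd ℂ (t:ℂ)) / 2 := by
      rw [Complex.add_conj]; push_cast; ring
    simp only [ContinuousMap.coe_mk, hre2, Polynomial.eval_mul, Polynomial.eval_C,
      Polynomial.eval_add, Polynomial.eval_pow, Polynomial.eval_X, pow_one]
    field_simp
    linear_combination (-((t:ℂ))) * hmc
  have hmem_im : (⟨fun t => (t:ℂ).im, Complex.continuous_im.comp continuous_subtype_val⟩ :
      C((Metric.sphere (0:ℂ) ρ : Set ℂ), ℝ)) ∈ laurentAlg hρ := by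
    refine ⟨Polynomial.C ((2*Complex.I*(ρ:ℂ)^2)⁻¹) *
      (Polynomial.X^2 - Polynomial.C ((ρ:ℂ)^2)), 1, fun t => ?_⟩
    have ht : ‖(t:ℂ)‖ = ρ := by have := t.2; simpa [mem_sphere_iff_norm] using this
    have hmc : (t:ℂ) * starRingEnd ℂ (t:ℂ) = ((ρ:ℂ))^2 := mul_conj_self ht
    have him2 : (((t:ℂ).im : ℝ) : ℂ) = ((t:ℂ) - starRingEnd ℂ (t:ℂ)) / (2 * Complex.I) := by
      rw [Complex.sub_conj]
      have h2I : (2:ℂ) * Complex.I ≠ 0 := by simp [Complex.I_ne_zero]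
      field_simp
      push_cast; ring
    simp only [ContinuousMap.coe_mk, him2, Polynomial.eval_mul, Polynomial.eval_C,
      Polynomial.eval_sub, Polynomial.eval_pow, Polynomial.eval_X, pow_one]
    have hI : (2:ℂ) * Complex.I * (ρ:ℂ)^2 ≠ 0 := by
      simp only [mul_ne_zero_iff]
      refine ⟨⟨two_ne_zero, Complex.I_ne_zero⟩, hρC⟩
    field_simp
    linear_combination (-((t:ℂ))) * hmc
  by_cases hre : (x:ℂ).re ≠ (y:ℂ).re
  · exact ⟨_, ⟨_, hmem_re, rfl⟩, hre⟩
  · have him : (x:ℂ).im ≠ (y:ℂ).im := by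
      intro h
      exact hxy' (Complex.ext (by simpa using hre) h)
    exact ⟨_, ⟨_, hmem_im, rfl⟩, him⟩

/-- Uniform approximation of continuous functions on the circle by real parts of
polynomials. -/
lemma exists_poly_re_near {ρ : ℝ} (hρ : 0 < ρ) (g : ℂ → ℝ)
    (hg : ContinuousOn g (Metric.sphere (0:ℂ) ρ)) {ε : ℝ} (hε : 0 < ε) :
    ∃ p : Polynomial ℂ, ∀ t : ℂ, ‖t‖ = ρ → |(p.eval t).re - g t| ≤ ε := by
  haveI : CompactSpace (Metric.sphere (0:ℂ) ρ : Set ℂ) :=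
    isCompact_iff_compactSpace.mp (isCompact_sphere 0 ρ)
  obtain ⟨G, hG⟩ := ContinuousMap.exists_mem_subalgebra_near_continuous_of_separatesPoints
    (laurentAlg hρ) (laurentAlg_separatesPoints hρ)
    (fun t : (Metric.sphere (0:ℂ) ρ : Set ℂ) => g ↑t) (hg.restrict) ε hε
  obtain ⟨p, n, hpn⟩ := G.2
  obtain ⟨P, hP⟩ := exists_re_poly_of_laurent hρ p n
  refine ⟨P, fun t ht => ?_⟩
  have htm : t ∈ Metric.sphere (0:ℂ) ρ := by simpa [mem_sphere_iff_norm] using ht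
  have h1 : ((G : C((Metric.sphere (0:ℂ) ρ : Set ℂ), ℝ)) ⟨t, htm⟩ : ℝ)
      = (P.eval t).re := by
    have := hpn ⟨t, htm⟩
    have h2 : ((G : C((Metric.sphere (0:ℂ) ρ : Set ℂ), ℝ)) ⟨t, htm⟩ : ℝ)
        = (p.eval t * (starRingEnd ℂ t)^n).re := by
      rw [← this]
      simp
    rw [h2, hP t ht]
  have := hG ⟨t, htm⟩
  rw [h1] at this
  have : |(P.eval t).re - g t| < ε := by simpa [Real.norm_eq_abs] using this
  exact this.le

end Circle



variable {E : Type*} [NormedAddCommGroup E] [NormedSpace ℂ E] {s : Set E}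

lemma add_coe_ne_top {a : EReal} (ha : a ≠ ⊤) (r : ℝ) : a + (r : EReal) ≠ ⊤ := by
  induction a using EReal.rec with
  | bot => simp
  | coe x => rw [← EReal.coe_add]; exact EReal.coe_ne_top _
  | top => exact absurd rfl ha

lemma contOn_usc {g : E → ℝ} (hg : ContinuousOn g s) :
    UpperSemicontinuousOn (fun x => ((g x : ℝ) : EReal)) s :=
  (continuous_coe_real_ereal.comp_continuousOn hg).upperSemicontinuousOn

/-- `PshOn` is stable under adding a continuous real psh function. -/
lemma PshOn.add_realPsh {f : E → EReal} {h : E → ℝ} (hf : PshOn f s)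
    (hh : RealPshOn h s) (hhc : ContinuousOn h s) :
    PshOn (fun x => f x + ((h x : ℝ) : EReal)) s := by
  obtain ⟨husc, hnt, hdom⟩ := hf
  obtain ⟨-, -, hhdom⟩ := hh
  refine ⟨?_, fun x hx => add_coe_ne_top (hnt x hx) _, ?_⟩
  · intro x hx y hy
    obtain ⟨m, hm1, hm2⟩ := EReal.lt_iff_exists_real_btwn.mp hy
    have h3 : f x < ((m - h x : ℝ) : EReal) := add_coe_lt_coe hm1
    obtain ⟨r, hr1, hr2⟩ := EReal.lt_iff_exists_real_btwn.mp h3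
    have hev1 := husc x hx _ hr1
    have hhr : h x < m - r := by
      have := EReal.coe_lt_coe_iff.mp hr2; linarith
    have hev2 : ∀ᶠ x' in nhdsWithin x s, h x' < m - r :=
      (hhc x hx).eventually_lt_const hhr
    filter_upwards [hev1, hev2] with x' h1 h2
    calc f x' + ((h x' : ℝ) : EReal) < (r : EReal) + ((m - r : ℝ) : EReal) :=
          EReal.add_lt_add h1 (EReal.coe_lt_coe_iff.mpr h2)
      _ = (m : EReal) := by rw [← EReal.coe_add]; norm_num
      _ < y := hm2
  · intro z hz w ρ hρ hdisc q hb t₀ ht₀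
    have main : ∀ ε : ℝ, 0 < ε →
        f (z + t₀ • w) + ((h (z + t₀ • w) : ℝ) : EReal) ≤
          (((q.eval t₀).re + 2*ε : ℝ) : EReal) := by
      intro ε hε
      set g : ℂ → ℝ := fun t => (q.eval t).re - h (z + t • w) with hgdef
      have hcont1 : Continuous fun t : ℂ => z + t • w :=
        continuous_const.add (continuous_id.smul continuous_const)
      have hgc : ContinuousOn g (Metric.sphere (0:ℂ) ρ) := by
        apply ContinuousOn.sub
        · exact (Complex.continuous_re.comp q.continuous).continuousOn
        · apply hhc.comp hcont1.continuousOn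
          intro t ht
          exact hdisc t (le_of_eq (by simpa [mem_sphere_iff_norm] using ht))
      obtain ⟨p, hp⟩ := exists_poly_re_near hρ g hgc hε
      have hf1 : ∀ t : ℂ, ‖t‖ = ρ →
          f (z + t • w) ≤ ((((p + Polynomial.C (ε:ℂ)).eval t).re : ℝ) : EReal) := by
        intro t ht
        have h1 : f (z + t • w) ≤ ((g t : ℝ) : EReal) := add_coe_le_coe_iff.mp (hb t ht)
        refine le_trans h1 (EReal.coe_le_coe_iff.mpr ?_)
        have hre : ((p + Polynomial.C (ε:ℂ)).eval t).re = (p.eval t).re + ε := by simp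
        have := abs_le.mp (hp t ht)
        rw [hre]; linarith
      have hf2 := hdom z hz w ρ hρ hdisc (p + Polynomial.C (ε:ℂ)) hf1 t₀ ht₀
      have hh1 : ∀ t : ℂ, ‖t‖ = ρ →
          ((h (z + t • w) : ℝ) : EReal) ≤
            ((((q - p + Polynomial.C (ε:ℂ)).eval t).re : ℝ) : EReal) := by
        intro t ht
        refine EReal.coe_le_coe_iff.mpr ?_
        have hre : ((q - p + Polynomial.C (ε:ℂ)).eval t).re
            = (q.eval t).re - (p.eval t).re + ε := by simp
        have := abs_le.mp (hp t ht)
        rw [hre]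
        simp only [hgdef] at this
        linarith [this.2]
      have hh2 := hhdom z hz w ρ hρ hdisc (q - p + Polynomial.C (ε:ℂ)) hh1 t₀ ht₀
      have hcomb := add_le_add hf2 hh2
      refine le_trans hcomb ?_
      rw [← EReal.coe_add]
      refine EReal.coe_le_coe_iff.mpr ?_
      have h1 : ((p + Polynomial.C (ε:ℂ)).eval t₀).re = (p.eval t₀).re + ε := by simp
      have h2 : ((q - p + Polynomial.C (ε:ℂ)).eval t₀).re
          = (q.eval t₀).re - (p.eval t₀).re + ε := by simp
      rw [h1, h2]; linarith
    by_contra hcon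
    have hlt := not_le.mp hcon
    obtain ⟨m, hm1, hm2⟩ := EReal.lt_iff_exists_real_btwn.mp hlt
    have hε : 0 < (m - (q.eval t₀).re)/2 := by
      have := EReal.coe_lt_coe_iff.mp hm1; linarith
    have := main _ hε
    rw [show (q.eval t₀).re + 2*((m - (q.eval t₀).re)/2) = m by ring] at this
    exact absurd (lt_of_le_of_lt this hm2) (lt_irrefl _)

/-- `PshOn` is stable under multiplication by a positive real constant. -/
lemma PshOn.const_mul {f : E → EReal} {c : ℝ} (hc : 0 < c) (hf : PshOn f s) :
    PshOn (fun x => ((c : ℝ) : EReal) * f x) s := by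
  obtain ⟨husc, hnt, hdom⟩ := hf
  refine ⟨?_, ?_, ?_⟩
  · intro x hx y hy
    obtain ⟨m, hm1, hm2⟩ := EReal.lt_iff_exists_real_btwn.mp hy
    have h3 : f x < ((m / c : ℝ) : EReal) := by
      by_contra hcon
      have hle := not_lt.mp hcon
      have := coe_mul_mono hc.le hle
      rw [← EReal.coe_mul, mul_div_cancel₀ _ hc.ne'] at this
      exact absurd (lt_of_le_of_lt (le_trans this (le_refl _)) hm1) (by simp)
    have hev := husc x hx _ h3
    filter_upwards [hev] with x' h1
    have h4 : ((c : ℝ) : EReal) * f x' ≤ ((c : ℝ) : EReal) * ((m / c : ℝ) : EReal) :=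
      coe_mul_mono hc.le h1.le
    rw [← EReal.coe_mul, mul_div_cancel₀ _ hc.ne'] at h4
    exact lt_of_le_of_lt h4 hm2
  · intro x hx
    show ((c : ℝ) : EReal) * f x ≠ ⊤
    have hne := hnt x hx
    revert hne
    induction f x using EReal.rec with
    | bot => intro _; rw [EReal.coe_mul_bot_of_pos hc]; simp
    | coe r => intro _; rw [← EReal.coe_mul]; exact EReal.coe_ne_top _
    | top => intro hne; exact absurd rfl hne
  · intro z hz w ρ hρ hdisc q hb t₀ ht₀
    have hb' : ∀ t : ℂ, ‖t‖ = ρ →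
        f (z + t • w) ≤ ((((Polynomial.C ((c⁻¹ : ℝ) : ℂ) * q).eval t).re : ℝ) : EReal) := by
      intro t ht
      have h1 := (coe_mul_le_coe_iff hc).mp (hb t ht)
      have h2 : ((Polynomial.C ((c⁻¹ : ℝ) : ℂ) * q).eval t).re = (q.eval t).re / c := by
        simp only [Polynomial.eval_mul, Polynomial.eval_C]
        rw [Complex.re_ofReal_mul]
        rw [inv_mul_eq_div]
      rw [h2]; exact h1
    have h3 := hdom z hz w ρ hρ hdisc _ hb' t₀ ht₀
    have h4 := coe_mul_mono hc.le h3
    have h5 : ((Polynomial.C ((c⁻¹ : ℝ) : ℂ) * q).eval t₀).re = (q.eval t₀).re / c := by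
      simp only [Polynomial.eval_mul, Polynomial.eval_C]
      rw [Complex.re_ofReal_mul, inv_mul_eq_div]
    rw [h5, ← EReal.coe_mul, mul_div_cancel₀ _ hc.ne'] at h4
    exact h4

/-- The zero function is plurisubharmonic. -/
lemma realPshOn_zero : RealPshOn (fun _ : E => (0:ℝ)) s := by
  refine ⟨contOn_usc continuousOn_const, fun x _ => EReal.coe_ne_top _, ?_⟩
  intro z hz w ρ hρ hdisc q hb t₀ ht₀
  refine EReal.coe_le_coe_iff.mpr ?_
  refine rePoly_nonneg hρ q (fun t ht => ?_) t₀ ht₀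
  exact EReal.coe_le_coe_iff.mp (hb t ht)

/-- `RealPshOn` is stable under multiplication by a nonnegative constant. -/
lemma RealPshOn.const_mul {g : E → ℝ} (hg : RealPshOn g s) {γ : ℝ} (hγ : 0 ≤ γ) :
    RealPshOn (fun x => γ * g x) s := by
  rcases hγ.eq_or_lt with h | h
  · have : (fun x : E => γ * g x) = fun _ : E => (0:ℝ) := by
      funext x; rw [← h, zero_mul]
    rw [this]; exact realPshOn_zero
  · have := PshOn.const_mul h hg
    unfold RealPshOn
    simpa only [EReal.coe_mul] using this

/-- `RealPshOn` is stable under addition with a continuous psh function. -/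
lemma RealPshOn.add {g h : E → ℝ} (hg : RealPshOn g s) (hh : RealPshOn h s)
    (hhc : ContinuousOn h s) : RealPshOn (fun x => g x + h x) s := by
  have := PshOn.add_realPsh hg hh hhc
  unfold RealPshOn
  simpa only [EReal.coe_add] using this

/-- Finite sums of continuous psh functions are psh. -/
lemma realPshOn_sum {ι : Type*} [DecidableEq ι] (T : Finset ι) (g : ι → E → ℝ)
    (h : ∀ i ∈ T, RealPshOn (g i) s ∧ ContinuousOn (g i) s) :
    RealPshOn (fun x => ∑ i ∈ T, g i x) s ∧ ContinuousOn (fun x => ∑ i ∈ T, g i x) s := by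
  induction T using Finset.induction_on with
  | empty =>
      simp only [Finset.sum_empty]
      exact ⟨realPshOn_zero, continuousOn_const⟩
  | @insert a T' ha IH =>
      have hmem : ∀ i ∈ T', RealPshOn (g i) s ∧ ContinuousOn (g i) s :=
        fun i hi => h i (Finset.mem_insert_of_mem hi)
      obtain ⟨IH1, IH2⟩ := IH hmem
      have ha' := h a (Finset.mem_insert_self a T')
      have hsum : (fun x => ∑ i ∈ insert a T', g i x) = fun x => g a x + ∑ i ∈ T', g i x := by
        funext x; exact Finset.sum_insert ha
      rw [hsum]
      exact ⟨RealPshOn.add ha'.1 IH1 IH2, ha'.2.add IH2⟩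

/-- `‖·‖²` is plurisubharmonic. -/
lemma realPshOn_norm_sq : RealPshOn (fun x : E => ‖x‖^2) s := by
  refine ⟨contOn_usc ((continuous_norm.pow 2).continuousOn),
    fun x _ => EReal.coe_ne_top _, ?_⟩
  intro z hz w ρ hρ hdisc q hb t₀ ht₀
  show ((‖z + t₀ • w‖^2 : ℝ) : EReal) ≤ _
  refine EReal.coe_le_coe_iff.mpr ?_
  have hbr : ∀ t : ℂ, ‖t‖ = ρ → ‖z + t • w‖^2 ≤ (q.eval t).re :=
    fun t ht => EReal.coe_le_coe_iff.mp (hb t ht)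
  obtain ⟨ℓ, hℓ1, hℓ2⟩ := exists_dual_vector'' ℂ (z + t₀ • w)
  set a := ℓ z with ha
  set b := ℓ w with hbdef
  have heval : ∀ t : ℂ, ℓ (z + t • w) = a + t * b := by
    intro t; rw [map_add, map_smul, smul_eq_mul]
  set P : Polynomial ℂ := Polynomial.C ((‖a‖^2 + ‖b‖^2*ρ^2 : ℝ) : ℂ) +
    Polynomial.C (2 * starRingEnd ℂ a * b) * Polynomial.X with hPdef
  have hPeval : ∀ t : ℂ, (P.eval t).re
      = ‖a‖^2 + ‖b‖^2*ρ^2 + (2 * starRingEnd ℂ a * b * t).re := by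
    intro t
    simp only [hPdef, Polynomial.eval_add, Polynomial.eval_mul, Polynomial.eval_C,
      Polynomial.eval_X, Complex.add_re, Complex.ofReal_re]
  have hkey : ∀ t : ℂ, ‖a + t*b‖^2
      = ‖a‖^2 + ‖t‖^2*‖b‖^2 + (2 * starRingEnd ℂ a * b * t).re := by
    intro t
    have hnsq : ∀ u : ℂ, Complex.normSq u = ‖u‖^2 := fun u => by
      rw [Complex.normSq_eq_norm_sq]
    have h1 : ‖a + t*b‖^2 = Complex.normSq (a + t*b) := (hnsq _).symm
    rw [h1, Complex.normSq_add]
    have h2 : Complex.normSq a = ‖a‖^2 := hnsq a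
    have h3 : Complex.normSq (t*b) = ‖t‖^2*‖b‖^2 := by
      rw [Complex.normSq_mul, hnsq, hnsq]
    have h4 : a * starRingEnd ℂ (t * b) = starRingEnd ℂ (starRingEnd ℂ a * b * t) := by
      simp only [map_mul, Complex.conj_conj]
      ring
    have h5 : (a * starRingEnd ℂ (t * b)).re = (starRingEnd ℂ a * b * t).re := by
      rw [h4, Complex.conj_re]
    have h6 : (2 * starRingEnd ℂ a * b * t).re = 2 * (starRingEnd ℂ a * b * t).re := by
      have : (2 : ℂ) * starRingEnd ℂ a * b * t = 2 * (starRingEnd ℂ a * b * t) := by ring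
      rw [this]
      simp [Complex.mul_re]
    rw [h2, h3, h5, h6]
    try ring
  have hℓnorm : ∀ x : E, ‖ℓ x‖ ≤ ‖x‖ := by
    intro x
    calc ‖ℓ x‖ ≤ ‖ℓ‖ * ‖x‖ := ℓ.le_opNorm x
      _ ≤ 1 * ‖x‖ := by
          apply mul_le_mul_of_nonneg_right hℓ1 (norm_nonneg x)
      _ = ‖x‖ := one_mul _
  have hPb : ∀ t : ℂ, ‖t‖ = ρ → 0 ≤ ((q - P).eval t).re := by
    intro t ht
    have h5 : (P.eval t).re = ‖a + t*b‖^2 := by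
      rw [hPeval, hkey t, ht]; ring
    have h6 : ‖a + t*b‖^2 ≤ ‖z + t•w‖^2 := by
      rw [← heval t]
      have := hℓnorm (z + t • w)
      nlinarith [norm_nonneg (ℓ (z + t • w))]
    have h7 := hbr t ht
    simp only [Polynomial.eval_sub, Complex.sub_re]
    linarith
  have h7 := rePoly_nonneg hρ (q - P) hPb t₀ ht₀
  simp only [Polynomial.eval_sub, Complex.sub_re] at h7
  have h8 : ‖z + t₀•w‖^2 = ‖a + t₀*b‖^2 := by
    rw [← heval t₀, hℓ2]
    simp [RCLike.norm_ofReal, abs_norm]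
  have h9 : ‖a + t₀*b‖^2 ≤ (P.eval t₀).re := by
    rw [hPeval, hkey t₀]
    have h10 : ‖t₀‖^2 ≤ ρ^2 := by
      nlinarith [norm_nonneg t₀]
    nlinarith [norm_nonneg b]
  linarith


end PshAux

open PshAux in
/-- Lemma 3.3(i): with `θ₁,…,θ_r` positive and `θ_{r+1}` a smooth closed real (1,1)-form
on the compact complex manifold `Y`, `θ_α = Σα_λθ_λ + (1−|α|)θ_{r+1}` and
`V_α = sup{ψ ∈ PSH(Y,θ_α) : ψ ≤ 0}` (`≡ −∞` if this family is empty): if `α ≤ β`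
componentwise with `|β| < 1`, then `V_α/(1−|α|) ≤ V_β/(1−|β|)` pointwise, stated in the
equivalent multiplied-out form `(1−|β|)·V_α ≤ (1−|α|)·V_β`. -/
theorem stmt_9 {E : Type*} [NormedAddCommGroup E] [NormedSpace ℂ E]
    {Y : Type*} [TopologicalSpace Y] [CompactSpace Y] [ChartedSpace E Y]
    [IsManifold 𝓘(ℂ, E) (⊤ : ℕ∞) Y]
    (r : ℕ) (pot : Fin (r + 1) → OpenPartialHomeomorph Y E → E → ℝ)
    (hpot : ∀ i, IsPotentialFamily E Y (pot i))
    (hpos : ∀ i : Fin (r + 1), (i : ℕ) < r → IsPositiveForm E Y (pot i))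
    (α β : Fin r → ℝ) (hα0 : ∀ i, 0 ≤ α i) (hβ0 : ∀ i, 0 ≤ β i)
    (hαβ : ∀ i, α i ≤ β i) (hβ1 : ∑ i, β i < 1) :
    ∀ y : Y,
      ((1 - ∑ i, β i : ℝ) : EReal) * pshEnvelope E Y (combPot E Y pot α) y ≤
        ((1 - ∑ i, α i : ℝ) : EReal) * pshEnvelope E Y (combPot E Y pot β) y := by
  classical
  intro y
  have hsab : (∑ i, α i) ≤ ∑ i, β i := Finset.sum_le_sum (fun i _ => hαβ i)
  have hβpos : (0:ℝ) < 1 - ∑ i, β i := by linarith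
  have hαpos : (0:ℝ) < 1 - ∑ i, α i := by linarith
  set c : ℝ := (1 - ∑ i, β i)/(1 - ∑ i, α i) with hcdef
  have hc : 0 < c := div_pos hβpos hαpos
  have hc1 : c * (1 - ∑ i, α i) = 1 - ∑ i, β i := div_mul_cancel₀ _ hαpos.ne'
  have hcle : c ≤ 1 := by
    rw [hcdef, div_le_one hαpos]; linarith
  have hγ : ∀ i, 0 ≤ β i - c * α i := by
    intro i
    have h1 : c * α i ≤ 1 * α i := mul_le_mul_of_nonneg_right hcle (hα0 i)
    have := hαβ i
    nlinarith
  have key : ∀ u : Y → EReal, ThetaPsh E Y (combPot E Y pot α) u → (∀ y', u y' ≤ 0) →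
      ThetaPsh E Y (combPot E Y pot β) (fun y' => ((c:ℝ):EReal) * u y') ∧
        (∀ y', ((c:ℝ):EReal) * u y' ≤ 0) := by
    intro u hu hun
    constructor
    · intro φ hφ
      set H : E → ℝ := fun x => ∑ i : Fin r, (β i - c * α i) * pot i.castSucc φ x with hHdef
      have hpotc : ∀ i : Fin (r+1), ContinuousOn (pot i φ) φ.target :=
        fun i => ((hpot i).1 φ hφ).continuousOn
      have hpotpsh : ∀ i : Fin r, RealPshOn (pot i.castSucc φ) φ.target := by
        intro i
        have hlt : ((i.castSucc : Fin (r+1)) : ℕ) < r := by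
          rw [Fin.coe_castSucc]; exact i.isLt
        obtain ⟨ε, hε, hψ⟩ := hpos i.castSucc hlt φ hφ
        have h1 : RealPshOn (fun x : E => ε * ‖x‖^2) φ.target :=
          PshAux.RealPshOn.const_mul PshAux.realPshOn_norm_sq hε.le
        have h2 : ContinuousOn (fun x : E => ε * ‖x‖^2) φ.target :=
          (continuous_const.mul (continuous_norm.pow 2)).continuousOn
        have h3 := PshAux.RealPshOn.add hψ h1 h2
        have heq : (fun x => (pot i.castSucc φ x - ε * ‖x‖^2) + ε * ‖x‖^2)
            = pot i.castSucc φ := by funext x; ring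
        exact heq ▸ h3
      have hHboth : RealPshOn H φ.target ∧ ContinuousOn H φ.target := by
        apply PshAux.realPshOn_sum
        intro i _
        exact ⟨PshAux.RealPshOn.const_mul (hpotpsh i) (hγ i),
          continuousOn_const.mul (hpotc i.castSucc)⟩
      have hiden : ∀ x : E,
          combPot E Y pot β φ x - c * combPot E Y pot α φ x = H x := by
        intro x
        have hH : H x = (∑ i : Fin r, β i * pot i.castSucc φ x)
            - c * ∑ i : Fin r, α i * pot i.castSucc φ x := by
          rw [hHdef]
          rw [Finset.mul_sum, ← Finset.sum_sub_distrib]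
          exact Finset.sum_congr rfl (fun i _ => by ring)
        rw [hH]
        show (∑ i : Fin r, β i * pot i.castSucc φ x)
            + (1 - ∑ i, β i) * pot (Fin.last r) φ x
            - c * ((∑ i : Fin r, α i * pot i.castSucc φ x)
              + (1 - ∑ i, α i) * pot (Fin.last r) φ x) = _
        rw [mul_add, ← mul_assoc, hc1]
        ring
      have hG := hu φ hφ
      have hGm := PshAux.PshOn.const_mul hc hG
      have hfin := PshAux.PshOn.add_realPsh hGm hHboth.1 hHboth.2
      show PshOn (fun x => ((combPot E Y pot β φ x : ℝ) : EReal)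
        + ((c:ℝ):EReal) * u (φ.symm x)) φ.target
      have heq2 : (fun x => ((combPot E Y pot β φ x : ℝ) : EReal)
            + ((c:ℝ):EReal) * u (φ.symm x))
          = fun x => (((c:ℝ):EReal) * (((combPot E Y pot α φ x : ℝ) : EReal)
              + u (φ.symm x))) + ((H x : ℝ) : EReal) := by
        funext x
        rw [PshAux.key_id (combPot E Y pot α φ x) (combPot E Y pot β φ x) c hc
          (u (φ.symm x)), hiden x]
      rw [heq2]
      exact hfin
    · intro y'
      calc ((c:ℝ):EReal) * u y' ≤ ((c:ℝ):EReal) * 0 := PshAux.coe_mul_mono hc.le (hun y')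
        _ = 0 := mul_zero _
  -- envelope comparison
  have hbpos : (0:EReal) < ((1 - ∑ i, β i : ℝ) : EReal) := EReal.coe_pos.mpr hβpos
  have hbne : ((1 - ∑ i, β i : ℝ) : EReal) ≠ ⊤ := EReal.coe_ne_top _
  set M : EReal := ((1 - ∑ i, α i : ℝ) : EReal) *
    pshEnvelope E Y (combPot E Y pot β) y with hMdef
  have hsup : pshEnvelope E Y (combPot E Y pot α) y ≤ M / ((1 - ∑ i, β i : ℝ) : EReal) := by
    apply sSup_le
    rintro a ⟨u, ⟨hu1, hu2⟩, rfl⟩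
    rw [EReal.le_div_iff_mul_le hbpos hbne]
    obtain ⟨hv1, hv2⟩ := key u hu1 hu2
    have hmem : ((c:ℝ):EReal) * u y ∈ (fun u : Y → EReal => u y) ''
        {u | ThetaPsh E Y (combPot E Y pot β) u ∧ ∀ y', u y' ≤ 0} :=
      ⟨fun y' => ((c:ℝ):EReal) * u y', ⟨hv1, hv2⟩, rfl⟩
    have hle : ((c:ℝ):EReal) * u y ≤ pshEnvelope E Y (combPot E Y pot β) y :=
      le_sSup hmem
    have h1 : u y * ((1 - ∑ i, β i : ℝ) : EReal)
        = ((1 - ∑ i, α i : ℝ) : EReal) * (((c:ℝ):EReal) * u y) := by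
      rw [PshAux.coe_mul_assoc,
        show (1 - ∑ i, α i) * c = 1 - ∑ i, β i from by rw [mul_comm]; exact hc1]
      exact EReal.mul_comm _ _
    calc u y * ((1 - ∑ i, β i : ℝ) : EReal)
        = ((1 - ∑ i, α i : ℝ) : EReal) * (((c:ℝ):EReal) * u y) := h1
      _ ≤ ((1 - ∑ i, α i : ℝ) : EReal) * pshEnvelope E Y (combPot E Y pot β) y :=
          PshAux.coe_mul_mono (by linarith) hle
      _ = M := rfl
  have hfin := (EReal.le_div_iff_mul_le hbpos hbne).mp hsup
  rw [EReal.mul_comm] at hfin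
  exact hfin
end
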